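/- arXiv:1106.0425 — 11 statements merged into one kernel-verified Lean document; each statement's English description precedes it below -/
import Mathlib

section
/- Let X and Y be sets and let P(X,Y) denote the set of partial maps from X to Y. Suppose that for each subset D ⊆ X we are given a binary operation ⋏_D on the set of partial maps with domain exactly D, such that each ⋏_D is idempotent, associative, and satisfies the rectangular identity f ⋏_D g ⋏_D h = f ⋏_D h, and the family is coherent: for all E ⊆ D ⊆ X and partial maps f, g with domain D, (f ⋏_D g)|_E = (f|_E) ⋏_E (g|_E). Define on P(X,Y), writing F = dom f and G = dom g: 0 = the empty partial map; f∧g = (f|_{F∩G}) ⋏_{F∩G} (g|_{F∩G}); f∨g = f|_{F−G} ∪ g|_{G−F} ∪ (g∧f); f∖g = f|_{F−G}; f⊓g = the partial map whose graph is the intersection of the graphs of f and g. Then (P(X,Y), ∧, ∨, 0, ∖, ⊓) is a skew Boolean ∩-algebra: ∧ and ∨ are idempotent and associative, the absorption laws f∧(f∨g)=f=(g∨f)∧f and f∨(f∧g)=f=(g∧f)∨f hold, meet distributivity f∧(g∨h)=(f∧g)∨(f∧h) and (g∨h)∧f=(g∧f)∨(h∧f) holds, 0∨f=f=f∨0, (f∖g)∧(f∧g∧f)=0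 and (f∖g)∨(f∧g∧f)=f, and f⊓g is the greatest lower bound of f and g in the natural partial order (f ≤ g iff f∧g=f=g∧f). -/
attribute [local instance] Classical.propDecidable

namespace SkewPartialMaps

variable {X Y : Type*}

/-- The domain of a partial map, represented as a function `X → Option Y`. -/
def dom (f : X → Option Y) : Set X := {x | (f x).isSome}

/-- Restriction of a partial map to a subset. -/
noncomputable def restrict (f : X → Option Y) (D : Set X) : X → Option Y :=
  fun x => if x ∈ D then f x else none

variable (w : Set X → (X → Option Y) → (X → Option Y) → (X → Option Y))

/-- The meet: `f ∧ g = (f|_{F∩G}) ⋏_{F∩G} (g|_{F∩G})`. -/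
noncomputable def meet (f g : X → Option Y) : X → Option Y :=
  w (dom f ∩ dom g) (restrict f (dom f ∩ dom g)) (restrict g (dom f ∩ dom g))

/-- The join: `f ∨ g = f|_{F−G} ∪ g|_{G−F} ∪ (g ∧ f)` (a union of partial maps
with pairwise disjoint domains). -/
noncomputable def join (f g : X → Option Y) : X → Option Y :=
  fun x => restrict f (dom f \ dom g) x <|> restrict g (dom g \ dom f) x <|> meet w g f x

/-- The relative complement: `f ∖ g = f|_{F−G}`. -/
noncomputable def sdiff (f g : X → Option Y) : X → Option Y :=
  restrict f (dom f \ dom g)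

/-- The intersection: the partial map whose graph is the intersection of the graphs. -/
noncomputable def pinter (f g : X → Option Y) : X → Option Y :=
  fun x => if f x = g x then f x else none

/-- The zero: the empty partial map. -/
def pzero : X → Option Y := fun _ => none

/-- The natural partial order: `f ≤ g` iff `f ∧ g = f = g ∧ f`. -/
noncomputable def nle (f g : X → Option Y) : Prop := meet w f g = f ∧ meet w g f = f


/-- A singleton partial map. -/
noncomputable def single (x : X) (a : Y) : X → Option Y :=
  fun y => if y = x then some a else none

/-- The pointwise binary operation on `Y` induced by the family `w` at point `x`. -/
noncomputable def mu (v : Set X → (X → Option Y) → (X → Option Y) → (X → Option Y))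
    (x : X) (a b : Y) : Y :=
  ((v {x} (single x a) (single x b)) x).getD a

/-- Theorem (Leech-style construction): given a coherent family of rectangular
band operations `⋏_D` on partial maps with domain `D`, the set of all partial
maps `X ⇀ Y` is a skew Boolean ∩-algebra under the operations above. -/
theorem skewBooleanInterAlgebra_of_coherent_rectangular
    (hdom : ∀ (D : Set X) (f g : X → Option Y), dom f = D → dom g = D → dom (w D f g) = D)
    (hidem : ∀ (D : Set X) (f : X → Option Y), dom f = D → w D f f = f)
    (hassoc : ∀ (D : Set X) (f g h : X → Option Y), dom f = D → dom g = D → dom h = D →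
      w D (w D f g) h = w D f (w D g h))
    (hrect : ∀ (D : Set X) (f g h : X → Option Y), dom f = D → dom g = D → dom h = D →
      w D (w D f g) h = w D f h)
    (hcoh : ∀ (E D : Set X) (f g : X → Option Y), E ⊆ D → dom f = D → dom g = D →
      restrict (w D f g) E = w E (restrict f E) (restrict g E)) :
    -- ∧ and ∨ are idempotent and associative
    (∀ f, meet w f f = f) ∧
    (∀ f g h, meet w (meet w f g) h = meet w f (meet w g h)) ∧
    (∀ f, join w f f = f) ∧
    (∀ f g h, join w (join w f g) h = join w f (join w g h)) ∧
    -- absorption laws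
    (∀ f g, meet w f (join w f g) = f) ∧
    (∀ f g, meet w (join w g f) f = f) ∧
    (∀ f g, join w f (meet w f g) = f) ∧
    (∀ f g, join w (meet w g f) f = f) ∧
    -- meet distributivity
    (∀ f g h, meet w f (join w g h) = join w (meet w f g) (meet w f h)) ∧
    (∀ f g h, meet w (join w g h) f = join w (meet w g f) (meet w h f)) ∧
    -- 0 is neutral for ∨
    (∀ f, join w pzero f = f) ∧
    (∀ f, join w f pzero = f) ∧
    -- relative complement laws
    (∀ f g, meet w (sdiff f g) (meet w f (meet w g f)) = pzero) ∧
    (∀ f g, join w (sdiff f g) (meet w f (meet w g f)) = f) ∧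
    -- f ⊓ g is the greatest lower bound of f and g in the natural partial order
    (∀ f g, nle w (pinter f g) f ∧ nle w (pinter f g) g ∧
      ∀ h, nle w h f → nle w h g → nle w h (pinter f g)) := by

  classical
  have domS : ∀ (x : X) (a : Y), dom (single x a) = ({x} : Set X) := by
    intro x a
    ext y
    by_cases h : y = x <;> simp [dom, single, h]
  have dom_restrict : ∀ (f : X → Option Y) (D : Set X), dom (restrict f D) = dom f ∩ D := by
    intro f D
    ext y
    by_cases h : y ∈ D <;> simp [dom, restrict, h]
  have none_of_not_mem : ∀ (k : X → Option Y) (x : X), x ∉ dom k → k x = none := by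
    intro k x hx
    rcases hk : k x with _ | c
    · rfl
    · exact absurd (by simp [dom, hk] : x ∈ dom k) hx
  have single_of : ∀ (h : X → Option Y) (x : X) (a : Y), dom h = {x} → h x = some a →
      h = single x a := by
    intro h x a hd hx
    funext y
    by_cases hy : y = x
    · subst hy; simp [single, hx]
    · have hmem : y ∉ dom h := by rw [hd]; simp [hy]
      rw [none_of_not_mem h y hmem]
      simp [single, hy]
  have restrict_single : ∀ (f : X → Option Y) (x : X) (a : Y), f x = some a →
      restrict f {x} = single x a := by
    intro f x a hx
    funext y
    by_cases hy : y = x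
    · subst hy; simp [restrict, single, hx]
    · simp [restrict, single, hy]
  have hpm : ∀ (x : X) (a b : Y),
      w {x} (single x a) (single x b) x = some (mu w x a b) := by
    intro x a b
    have hd := hdom {x} _ _ (domS x a) (domS x b)
    have hs : (w {x} (single x a) (single x b) x).isSome := by
      have hx : x ∈ dom (w {x} (single x a) (single x b)) := by
        rw [hd]; exact rfl
      exact hx
    obtain ⟨c, hc⟩ := Option.isSome_iff_exists.mp hs
    simp [mu, hc]
  have w_single : ∀ (x : X) (a b : Y),
      w {x} (single x a) (single x b) = single x (mu w x a b) := by
    intro x a b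
    exact single_of _ _ _ (hdom {x} _ _ (domS x a) (domS x b)) (hpm x a b)
  have mu_idem : ∀ (x : X) (a : Y), mu w x a a = a := by
    intro x a
    have h := hpm x a a
    rw [hidem {x} (single x a) (domS x a)] at h
    simpa [single] using h.symm
  have mu_assoc : ∀ (x : X) (a b c : Y),
      mu w x (mu w x a b) c = mu w x a (mu w x b c) := by
    intro x a b c
    have h := hassoc {x} (single x a) (single x b) (single x c)
      (domS x a) (domS x b) (domS x c)
    rw [w_single x a b, w_single x b c] at h
    have h2 := congrFun h x
    rw [hpm, hpm] at h2
    exact Option.some.inj h2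
  have mu_rect : ∀ (x : X) (a b c : Y),
      mu w x (mu w x a b) c = mu w x a c := by
    intro x a b c
    have h := hrect {x} (single x a) (single x b) (single x c)
      (domS x a) (domS x b) (domS x c)
    rw [w_single x a b] at h
    have h2 := congrFun h x
    rw [hpm, hpm] at h2
    exact Option.some.inj h2
  have mu_rect' : ∀ (x : X) (a b c : Y),
      mu w x a (mu w x b c) = mu w x a c := by
    intro x a b c
    rw [← mu_assoc, mu_rect]
  -- evaluation of meet
  have meet_some : ∀ (f g : X → Option Y) (x : X) (a b : Y), f x = some a → g x = some b →
      meet w f g x = some (mu w x a b) := by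
    intro f g x a b hfa hgb
    have hxf : x ∈ dom f := by simp [dom, hfa]
    have hxg : x ∈ dom g := by simp [dom, hgb]
    set D := dom f ∩ dom g with hD
    have hxD : x ∈ D := ⟨hxf, hxg⟩
    show w D (restrict f D) (restrict g D) x = some (mu w x a b)
    have hdf : dom (restrict f D) = D := by
      rw [dom_restrict]
      exact Set.inter_eq_self_of_subset_right Set.inter_subset_left
    have hdg : dom (restrict g D) = D := by
      rw [dom_restrict]
      exact Set.inter_eq_self_of_subset_right Set.inter_subset_right
    have hfx' : restrict f D x = some a := by simp [restrict, hxD, hfa]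
    have hgx' : restrict g D x = some b := by simp [restrict, hxD, hgb]
    have hc := hcoh {x} D (restrict f D) (restrict g D)
      (Set.singleton_subset_iff.mpr hxD) hdf hdg
    rw [restrict_single _ _ _ hfx', restrict_single _ _ _ hgx'] at hc
    have h2 := congrFun hc x
    rw [hpm] at h2
    have h3 : restrict (w D (restrict f D) (restrict g D)) {x} x
        = w D (restrict f D) (restrict g D) x := by simp [restrict]
    rw [h3] at h2
    exact h2
  have dom_meet : ∀ (f g : X → Option Y), dom (meet w f g) = dom f ∩ dom g := by
    intro f g
    show dom (w (dom f ∩ dom g) _ _) = _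
    exact hdom _ _ _
      (by rw [dom_restrict]; exact Set.inter_eq_self_of_subset_right Set.inter_subset_left)
      (by rw [dom_restrict]; exact Set.inter_eq_self_of_subset_right Set.inter_subset_right)
  have meet_none_left : ∀ (f g : X → Option Y) (x : X), f x = none → meet w f g x = none := by
    intro f g x hfa
    apply none_of_not_mem
    rw [dom_meet]
    rintro ⟨h1, _⟩
    simp [dom, hfa] at h1
  have meet_none_right : ∀ (f g : X → Option Y) (x : X), g x = none → meet w f g x = none := by
    intro f g x hga
    apply none_of_not_mem
    rw [dom_meet]
    rintro ⟨_, h2⟩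
    simp [dom, hga] at h2
  have meet_eval : ∀ (f g : X → Option Y) (x : X),
      meet w f g x = (f x).elim none (fun a => (g x).elim none (fun b => some (mu w x a b))) := by
    intro f g x
    rcases hf : f x with _ | a
    · rw [meet_none_left f g x hf]; rfl
    · rcases hg : g x with _ | b
      · rw [meet_none_right f g x hg]; rfl
      · rw [meet_some f g x a b hf hg]; rfl
  -- evaluation of join
  have join_none_left : ∀ (f g : X → Option Y) (x : X), f x = none → join w f g x = g x := by
    intro f g x hf
    have hm0 : restrict f (dom f \ dom g) x = none := by
      by_cases h : x ∈ dom f \ dom g <;> simp [restrict, h, hf]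
    rcases hg : g x with _ | b
    · have hrg : restrict g (dom g \ dom f) x = none := by
        by_cases h : x ∈ dom g \ dom f <;> simp [restrict, h, hg]
      have hm := meet_none_left g f x hg
      simp [join, hm0, hrg, hm]
    · have hxm : x ∈ dom g \ dom f := ⟨by simp [dom, hg], by simp [dom, hf]⟩
      have hrg : restrict g (dom g \ dom f) x = some b := by simp [restrict, hxm, hg]
      simp [join, hm0, hrg]
  have join_none_right : ∀ (f g : X → Option Y) (x : X), g x = none → join w f g x = f x := by
    intro f g x hg
    have hm := meet_none_left g f x hg
    have hrg : restrict g (dom g \ dom f) x = none := by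
      by_cases h : x ∈ dom g \ dom f <;> simp [restrict, h, hg]
    rcases hf : f x with _ | a
    · have hrf : restrict f (dom f \ dom g) x = none := by
        by_cases h : x ∈ dom f \ dom g <;> simp [restrict, h, hf]
      simp [join, hrf, hrg, hm]
    · have hxm : x ∈ dom f \ dom g := ⟨by simp [dom, hf], by simp [dom, hg]⟩
      have hrf : restrict f (dom f \ dom g) x = some a := by simp [restrict, hxm, hf]
      simp [join, hrf, hrg, hm]
  have join_some : ∀ (f g : X → Option Y) (x : X) (a b : Y), f x = some a → g x = some b →
      join w f g x = some (mu w x b a) := by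
    intro f g x a b hf hg
    have h1 : restrict f (dom f \ dom g) x = none := by
      have hnm : x ∉ dom f \ dom g := fun h => h.2 (by simp [dom, hg])
      simp [restrict, hnm]
    have h2 : restrict g (dom g \ dom f) x = none := by
      have hnm : x ∉ dom g \ dom f := fun h => h.2 (by simp [dom, hf])
      simp [restrict, hnm]
    have h3 := meet_some g f x b a hg hf
    simp [join, h1, h2, h3]
  have join_eval : ∀ (f g : X → Option Y) (x : X),
      join w f g x
        = (f x).elim (g x) (fun a => (g x).elim (some a) (fun b => some (mu w x b a))) := by
    intro f g x
    rcases hf : f x with _ | a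
    · rw [join_none_left f g x hf]; rfl
    · rcases hg : g x with _ | b
      · rw [join_none_right f g x hg, hf]; rfl
      · rw [join_some f g x a b hf hg]; rfl
  -- evaluation of sdiff
  have sdiff_eval : ∀ (f g : X → Option Y) (x : X),
      sdiff f g x = (g x).elim (f x) (fun _ => none) := by
    intro f g x
    rcases hg : g x with _ | b
    · rcases hf : f x with _ | a
      · have h : restrict f (dom f \ dom g) x = none := by
          by_cases hm : x ∈ dom f \ dom g <;> simp [restrict, hm, hf]
        simp [sdiff, h, hf]
      · have hxm : x ∈ dom f \ dom g := ⟨by simp [dom, hf], by simp [dom, hg]⟩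
        simp [sdiff, restrict, hxm, hf]
    · have hnm : x ∉ dom f \ dom g := fun h => h.2 (by simp [dom, hg])
      simp [sdiff, restrict, hnm]
  -- natural order, pointwise
  have hnle_mp : ∀ (k f : X → Option Y), nle w k f → ∀ (x : X) (a : Y),
      k x = some a → f x = some a := by
    intro k f hkf x a ha
    have e1 := congrFun hkf.1 x
    have e2 := congrFun hkf.2 x
    rw [meet_eval] at e1 e2
    rcases hfx : f x with _ | b
    · rw [ha, hfx] at e1
      simp at e1
    · rw [ha, hfx] at e1 e2
      simp at e1 e2
      have hba : b = a := by
        calc b = mu w x b (mu w x a b) := by rw [mu_rect', mu_idem]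
          _ = mu w x b a := by rw [e1]
          _ = a := e2
      rw [hba]
  have hnle_mpr : ∀ (k f : X → Option Y),
      (∀ (x : X) (a : Y), k x = some a → f x = some a) → nle w k f := by
    intro k f hp
    refine ⟨funext fun x => ?_, funext fun x => ?_⟩
    · rcases hk : k x with _ | a
      · rw [meet_eval, hk]; rfl
      · have hfx := hp x a hk
        rw [meet_eval, hk, hfx]
        simp [mu_idem]
    · rcases hk : k x with _ | a
      · rcases hfx : f x with _ | b
        · rw [meet_eval, hk, hfx]; rfl
        · rw [meet_eval, hk, hfx]; rfl
      · have hfx := hp x a hk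
        rw [meet_eval, hk, hfx]
        simp [mu_idem]
  refine ⟨?_, ?_, ?_, ?_, ?_, ?_, ?_, ?_, ?_, ?_, ?_, ?_, ?_, ?_, ?_⟩
  · intro f
    funext x
    simp only [meet_eval]
    rcases hf : f x with _ | a <;> simp [hf, mu_idem]
  · intro f g h
    funext x
    simp only [meet_eval]
    rcases hf : f x with _ | a <;> rcases hg : g x with _ | b <;> rcases hh : h x with _ | c <;>
      simp [hf, hg, hh, mu_idem, mu_rect, mu_rect']
  · intro f
    funext x
    simp only [join_eval]
    rcases hf : f x with _ | a <;> simp [hf, mu_idem]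
  · intro f g h
    funext x
    simp only [join_eval]
    rcases hf : f x with _ | a <;> rcases hg : g x with _ | b <;> rcases hh : h x with _ | c <;>
      simp [hf, hg, hh, mu_idem, mu_rect, mu_rect']
  · intro f g
    funext x
    simp only [meet_eval, join_eval]
    rcases hf : f x with _ | a <;> rcases hg : g x with _ | b <;>
      simp [hf, hg, mu_idem, mu_rect, mu_rect']
  · intro f g
    funext x
    simp only [meet_eval, join_eval]
    rcases hf : f x with _ | a <;> rcases hg : g x with _ | b <;>
      simp [hf, hg, mu_idem, mu_rect, mu_rect']
  · intro f g
    funext x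
    simp only [meet_eval, join_eval]
    rcases hf : f x with _ | a <;> rcases hg : g x with _ | b <;>
      simp [hf, hg, mu_idem, mu_rect, mu_rect']
  · intro f g
    funext x
    simp only [meet_eval, join_eval]
    rcases hf : f x with _ | a <;> rcases hg : g x with _ | b <;>
      simp [hf, hg, mu_idem, mu_rect, mu_rect']
  · intro f g h
    funext x
    simp only [meet_eval, join_eval]
    rcases hf : f x with _ | a <;> rcases hg : g x with _ | b <;> rcases hh : h x with _ | c <;>
      simp [hf, hg, hh, mu_idem, mu_rect, mu_rect']
  · intro f g h
    funext x
    simp only [meet_eval, join_eval]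
    rcases hf : f x with _ | a <;> rcases hg : g x with _ | b <;> rcases hh : h x with _ | c <;>
      simp [hf, hg, hh, mu_idem, mu_rect, mu_rect']
  · intro f
    funext x
    simp only [join_eval, pzero]
    rcases hf : f x with _ | a <;> simp [hf]
  · intro f
    funext x
    simp only [join_eval, pzero]
    rcases hf : f x with _ | a <;> simp [hf]
  · intro f g
    funext x
    simp only [meet_eval, sdiff_eval, pzero]
    rcases hf : f x with _ | a <;> rcases hg : g x with _ | b <;>
      simp [hf, hg, mu_idem, mu_rect, mu_rect']
  · intro f g
    funext x
    simp only [meet_eval, join_eval, sdiff_eval]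
    rcases hf : f x with _ | a <;> rcases hg : g x with _ | b <;>
      simp [hf, hg, mu_idem, mu_rect, mu_rect']
  · intro f g
    have hpf : ∀ (x : X) (a : Y), pinter f g x = some a → f x = some a := by
      intro x a hx
      by_cases h : f x = g x
      · simpa [pinter, h] using hx
      · simp [pinter, h] at hx
    have hpg : ∀ (x : X) (a : Y), pinter f g x = some a → g x = some a := by
      intro x a hx
      by_cases h : f x = g x
      · rw [← h]
        simpa [pinter, h] using hx
      · simp [pinter, h] at hx
    refine ⟨hnle_mpr _ _ hpf, hnle_mpr _ _ hpg, ?_⟩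
    intro k hkf hkg
    apply hnle_mpr
    intro x a hk
    have h1 := hnle_mp k f hkf x a hk
    have h2 := hnle_mp k g hkg x a hk
    simp [pinter, h1, h2]

end SkewPartialMaps
end

section
/- Let p : E → B and p' : E' → B be local homeomorphisms of topological spaces, and let f, g : E → E' be continuous maps satisfying p' ∘ f = p and p' ∘ g = p. Let R be the smallest equivalence relation on E' containing the relation S = {(f(x), g(x)) | x ∈ E}. Then the canonical quotient map q : E' → E'/R (where E'/R carries the quotient topology) is an open map. -/
theorem quotient_map_isOpenMap {E E' B : Type*}
    [TopologicalSpace E] [TopologicalSpace E'] [TopologicalSpace B]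
    (p : E → B) (p' : E' → B)
    (hp : IsLocalHomeomorph p) (hp' : IsLocalHomeomorph p')
    (f g : E → E') (hf : Continuous f) (hg : Continuous g)
    (hpf : p' ∘ f = p) (hpg : p' ∘ g = p) :
    IsOpenMap (Quot.mk (Relation.EqvGen (fun a b : E' => ∃ x : E, f x = a ∧ g x = b))) := by
  set S := fun a b : E' => ∃ x : E, f x = a ∧ g x = b with hS
  have hfl : IsLocalHomeomorph f := IsLocalHomeomorph.of_comp (by rwa [hpf]) hp' hf
  have hgl : IsLocalHomeomorph g := IsLocalHomeomorph.of_comp (by rwa [hpg]) hp' hg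
  have hfo : IsOpenMap f := hfl.isOpenMap
  have hgo : IsOpenMap g := hgl.isOpenMap
  intro U hU
  set V : Set E' := {y | ∃ u ∈ U, Relation.EqvGen S u y} with hV
  have hUV : U ⊆ V := fun u hu => ⟨u, hu, Relation.EqvGen.refl u⟩
  have key : ∀ a b, Relation.EqvGen S a b →
      (a ∈ interior V → b ∈ interior V) ∧ (b ∈ interior V → a ∈ interior V) := by
    intro a b h
    induction h with
    | rel a b hab =>
      obtain ⟨x, hxa, hxb⟩ := hab
      constructor
      · intro ha
        have hmem : b ∈ g '' (f ⁻¹' interior V) := ⟨x, by simp [hxa, ha], hxb⟩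
        have hopen : IsOpen (g '' (f ⁻¹' interior V)) :=
          hgo _ (isOpen_interior.preimage hf)
        have hsub : g '' (f ⁻¹' interior V) ⊆ V := by
          rintro _ ⟨x', hx', rfl⟩
          obtain ⟨u, hu, huv⟩ := interior_subset hx'
          exact ⟨u, hu, huv.trans _ _ _ (Relation.EqvGen.rel _ _ ⟨x', rfl, rfl⟩)⟩
        exact interior_maximal hsub hopen hmem
      · intro hb
        have hmem : a ∈ f '' (g ⁻¹' interior V) := ⟨x, by simp [hxb, hb], hxa⟩
        have hopen : IsOpen (f '' (g ⁻¹' interior V)) :=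
          hfo _ (isOpen_interior.preimage hg)
        have hsub : f '' (g ⁻¹' interior V) ⊆ V := by
          rintro _ ⟨x', hx', rfl⟩
          obtain ⟨u, hu, huv⟩ := interior_subset hx'
          exact ⟨u, hu, huv.trans _ _ _
            ((Relation.EqvGen.rel _ _ ⟨x', rfl, rfl⟩).symm _ _)⟩
        exact interior_maximal hsub hopen hmem
    | refl a => exact ⟨id, id⟩
    | symm a b _ ih => exact ⟨ih.2, ih.1⟩
    | trans a b c _ _ ih1 ih2 => exact ⟨fun h => ih2.1 (ih1.1 h), fun h => ih1.2 (ih2.2 h)⟩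
  have hVopen : IsOpen V := by
    rw [← subset_interior_iff_isOpen]
    rintro y ⟨u, hu, huv⟩
    exact (key u y huv).1 (interior_maximal hUV hU hu)
  have : Quot.mk (Relation.EqvGen S) ⁻¹' (Quot.mk (Relation.EqvGen S) '' U) = V := by
    ext y
    constructor
    · rintro ⟨u, hu, hq⟩
      exact ⟨u, hu, (Relation.EqvGen.is_equivalence S).eqvGen_iff.mp (Quot.eqvGen_exact hq)⟩
    · rintro ⟨u, hu, huv⟩
      exact ⟨u, hu, Quot.sound huv⟩
  rw [isOpen_coinduced] at *
  rw [this]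
  exact hVopen
end

section
/- Let A be a skew Boolean ∩-algebra, let P ⊆ A be a prime ideal, and let x, y ∈ A. If x ≤ y in the natural partial order and x ∉ P, then x θ_P y. -/
universe u

/-- A skew Boolean ∩-algebra. -/
class SkewBooleanInterAlgebra (α : Type u) where
  meet : α → α → α
  join : α → α → α
  zero : α
  rcomp : α → α → α
  inter : α → α → α
  meet_idem : ∀ x, meet x x = x
  meet_assoc : ∀ x y z, meet (meet x y) z = meet x (meet y z)
  join_idem : ∀ x, join x x = x
  join_assoc : ∀ x y z, join (join x y) z = join x (join y z)
  absorb₁ : ∀ x y, meet x (join x y) = x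
  absorb₂ : ∀ x y, meet (join y x) x = x
  absorb₃ : ∀ x y, join x (meet x y) = x
  absorb₄ : ∀ x y, join (meet y x) x = x
  meet_distrib_left : ∀ x y z, meet x (join y z) = join (meet x y) (meet x z)
  meet_distrib_right : ∀ x y z, meet (join y z) x = join (meet y x) (meet z x)
  zero_join : ∀ x, join zero x = x
  join_zero : ∀ x, join x zero = x
  rcomp_meet : ∀ x y, meet (rcomp x y) (meet x (meet y x)) = zero
  rcomp_join : ∀ x y, join (rcomp x y) (meet x (meet y x)) = x
  normality : ∀ x y z w, meet x (meet y (meet z w)) = meet x (meet z (meet y w))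
  regularity : ∀ x y z, join x (join y (join x (join z x))) = join x (join y (join z x))
  inter_le_left : ∀ x y, meet (inter x y) x = inter x y ∧ meet x (inter x y) = inter x y
  inter_le_right : ∀ x y, meet (inter x y) y = inter x y ∧ meet y (inter x y) = inter x y
  inter_glb : ∀ x y z, (meet z x = z ∧ meet x z = z) → (meet z y = z ∧ meet y z = z) →
    meet z (inter x y) = z ∧ meet (inter x y) z = z

namespace SkewBooleanInterAlgebra

variable {α : Type u} [SkewBooleanInterAlgebra α]

/-- The natural partial order: `x ≤ y` iff `x∧y = x = y∧x`. -/
def nle (x y : α) : Prop := meet x y = x ∧ meet y x = x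

/-- The natural preorder: `x ≼ y` iff `x∧y∧x = x`. -/
def npre (x y : α) : Prop := meet x (meet y x) = x

/-- Green's relation `D`: `x D y` iff `x ≼ y` and `y ≼ x`. -/
def dGreen (x y : α) : Prop := npre x y ∧ npre y x

/-- An ideal: contains `0`, closed under `∨`, downward closed under `≼`. -/
def IsIdeal (I : Set α) : Prop :=
  zero ∈ I ∧ (∀ x ∈ I, ∀ y ∈ I, join x y ∈ I) ∧ (∀ x y : α, y ∈ I → npre x y → x ∈ I)

/-- A prime ideal: a proper ideal such that `a∧b ∈ P` implies `a ∈ P` or `b ∈ P`. -/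
def IsPrimeIdeal (P : Set α) : Prop :=
  IsIdeal P ∧ P ≠ Set.univ ∧ ∀ a b : α, meet a b ∈ P → a ∈ P ∨ b ∈ P

/-- The congruence `θ_P` associated with an ideal `P`. -/
def theta (P : Set α) (x y : α) : Prop :=
  join (rcomp x (inter x y)) (rcomp y (inter x y)) ∈ P

end SkewBooleanInterAlgebra

open SkewBooleanInterAlgebra

theorem theta_of_nle_not_mem {α : Type u} [SkewBooleanInterAlgebra α]
    (P : Set α) (hP : IsPrimeIdeal P) (x y : α)
    (hxy : nle x y) (hx : x ∉ P) :
    theta P x y := by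
  obtain ⟨hx1, hx2⟩ := hxy
  have hi : inter x y = x := by
    have h1 := inter_le_left x y
    have h2 := inter_glb x y x ⟨meet_idem x, meet_idem x⟩ ⟨hx1, hx2⟩
    calc inter x y = meet x (inter x y) := (h1.2).symm
      _ = x := h2.1
  unfold theta
  rw [hi]
  have hr : meet (rcomp x x) x = zero := by
    have := rcomp_meet x x
    rwa [meet_idem, meet_idem] at this
  have hs : meet (rcomp y x) x = zero := by
    have := rcomp_meet y x
    rwa [hx1, hx2] at this
  have hmeet : meet (join (rcomp x x) (rcomp y x)) x = zero := by
    rw [meet_distrib_right, hr, hs, join_zero]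
  have h0 : meet (join (rcomp x x) (rcomp y x)) x ∈ P := by
    rw [hmeet]; exact hP.1.1
  rcases hP.2.2 _ _ h0 with h | h
  · exact h
  · exact absurd h hx
end

section
/- Let A be a skew Boolean ∩-algebra, let P ⊆ A be a prime ideal, and let a, b, t ∈ A. Then (a ∉ P and b ∉ P and t θ_P a and t θ_P b) holds if and only if (a⊓b ∉ P and t θ_P (a⊓b)) holds. -/
universe u

open SkewBooleanInterAlgebra

section Aux

variable {α : Type u} [SkewBooleanInterAlgebra α]

private lemma nle_trans {x y z : α} (h1 : nle x y) (h2 : nle y z) : nle x z := by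
  constructor
  · rw [← h1.1, meet_assoc, h2.1, h1.1]
  · rw [← h1.2, ← meet_assoc, h2.2, h1.2]

private lemma npre_of_nle {x y : α} (h : nle x y) : npre x y := by
  show meet x (meet y x) = x
  rw [h.2, meet_idem]

private lemma npre_join_left (x y : α) : npre x (join x y) := by
  show meet x (meet (join x y) x) = x
  rw [← meet_assoc, absorb₁, meet_idem]

private lemma npre_join_right (x y : α) : npre y (join x y) := by
  show meet y (meet (join x y) y) = y
  rw [absorb₂, meet_idem]

private lemma nle_inter_left (x y : α) : nle (inter x y) x :=
  ⟨(inter_le_left x y).1, (inter_le_left x y).2⟩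

private lemma nle_inter_right (x y : α) : nle (inter x y) y :=
  ⟨(inter_le_right x y).1, (inter_le_right x y).2⟩

private lemma nle_inter {x y z : α} (hx : nle z x) (hy : nle z y) : nle z (inter x y) := by
  have := inter_glb x y z ⟨hx.1, hx.2⟩ ⟨hy.1, hy.2⟩
  exact ⟨this.1, this.2⟩

/-- Elements below a common upper bound commute. -/
private lemma meet_comm_of_nle {x y t : α} (hx : nle x t) (hy : nle y t) :
    meet x y = meet y x := by
  conv_lhs => rw [← hx.2, ← hy.1]
  rw [meet_assoc, normality, ← meet_assoc, hy.2, hx.1]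

private lemma meet_nle_left {x y t : α} (hx : nle x t) (hy : nle y t) : nle (meet x y) x := by
  constructor
  · rw [meet_assoc, meet_comm_of_nle hy hx, ← meet_assoc, meet_idem]
  · rw [← meet_assoc, meet_idem]

private lemma meet_nle_right {x y t : α} (hx : nle x t) (hy : nle y t) : nle (meet x y) y := by
  constructor
  · rw [meet_assoc, meet_idem]
  · rw [meet_comm_of_nle hx hy, ← meet_assoc, meet_idem]

private lemma ideal_down {P : Set α} (hI : IsIdeal P) {x y : α}
    (hy : y ∈ P) (h : npre x y) : x ∈ P := hI.2.2 x y hy h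

private lemma ideal_down_nle {P : Set α} (hI : IsIdeal P) {x y : α}
    (hy : y ∈ P) (h : nle x y) : x ∈ P := ideal_down hI hy (npre_of_nle h)

private lemma join_mem_iff {P : Set α} (hI : IsIdeal P) (u v : α) :
    join u v ∈ P ↔ u ∈ P ∧ v ∈ P := by
  constructor
  · intro h
    exact ⟨ideal_down hI h (npre_join_left u v), ideal_down hI h (npre_join_right u v)⟩
  · intro h
    exact hI.2.1 u h.1 v h.2

private lemma theta_iff {P : Set α} (hI : IsIdeal P) (x y : α) :
    theta P x y ↔ rcomp x (inter x y) ∈ P ∧ rcomp y (inter x y) ∈ P :=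
  join_mem_iff hI _ _

private lemma meet_inter_left (x y : α) : meet x (meet (inter x y) x) = inter x y := by
  rw [(inter_le_left x y).1, (inter_le_left x y).2]

private lemma meet_inter_right (x y : α) : meet y (meet (inter x y) y) = inter x y := by
  rw [(inter_le_right x y).1, (inter_le_right x y).2]

/-- `x = (x ∖ (x⊓y)) ∨ (x⊓y)`. -/
private lemma decomp_left (x y : α) : join (rcomp x (inter x y)) (inter x y) = x := by
  have := rcomp_join x (inter x y)
  rwa [meet_inter_left] at this

private lemma decomp_right (x y : α) : join (rcomp y (inter x y)) (inter x y) = y := by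
  have := rcomp_join y (inter x y)
  rwa [meet_inter_right] at this

private lemma rcomp_meet_inter_left (x y : α) :
    meet (rcomp x (inter x y)) (inter x y) = SkewBooleanInterAlgebra.zero := by
  have := rcomp_meet x (inter x y)
  rwa [meet_inter_left] at this

private lemma rcomp_meet_inter_right (x y : α) :
    meet (rcomp y (inter x y)) (inter x y) = SkewBooleanInterAlgebra.zero := by
  have := rcomp_meet y (inter x y)
  rwa [meet_inter_right] at this

/-- If `x θ_P y` and `x ∈ P`, then `y ∈ P`. -/
private lemma mem_of_theta {P : Set α} (hI : IsIdeal P) {x y : α}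
    (h : theta P x y) (hx : x ∈ P) : y ∈ P := by
  have hm : inter x y ∈ P := ideal_down_nle hI hx (nle_inter_left x y)
  have hy := ((theta_iff hI x y).1 h).2
  have := hI.2.1 _ hy _ hm
  rwa [decomp_right] at this

/-- If `x⊓y ∉ P` with `P` prime, then `x θ_P y`. -/
private lemma theta_of_inter_not_mem {P : Set α} (hP : IsPrimeIdeal P) {x y : α}
    (h : inter x y ∉ P) : theta P x y := by
  have h0 : SkewBooleanInterAlgebra.zero ∈ P := hP.1.1
  have hx : rcomp x (inter x y) ∈ P := by
    rcases hP.2.2 (rcomp x (inter x y)) (inter x y) (by rw [rcomp_meet_inter_left]; exact h0) with h' | h'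
    · exact h'
    · exact absurd h' h
  have hy : rcomp y (inter x y) ∈ P := by
    rcases hP.2.2 (rcomp y (inter x y)) (inter x y) (by rw [rcomp_meet_inter_right]; exact h0) with h' | h'
    · exact h'
    · exact absurd h' h
  exact (theta_iff hP.1 x y).2 ⟨hx, hy⟩

/-- If `x θ_P y` and `x ∉ P`, then `x⊓y ∉ P`. -/
private lemma inter_not_mem_of_theta {P : Set α} (hI : IsIdeal P) {x y : α}
    (h : theta P x y) (hx : x ∉ P) : inter x y ∉ P := by
  intro hm
  have hr := ((theta_iff hI x y).1 h).1
  have := hI.2.1 _ hr _ hm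
  rw [decomp_left] at this
  exact hx this

end Aux

theorem theta_inter_iff {α : Type u} [SkewBooleanInterAlgebra α]
    (P : Set α) (hP : IsPrimeIdeal P) (a b t : α) :
    (a ∉ P ∧ b ∉ P ∧ theta P t a ∧ theta P t b) ↔
      (inter a b ∉ P ∧ theta P t (inter a b)) := by
  constructor
  · rintro ⟨ha, hb, hta, htb⟩
    have ht : t ∉ P := fun htP => ha (mem_of_theta hP.1 hta htP)
    have hma : inter t a ∉ P := inter_not_mem_of_theta hP.1 hta ht
    have hmb : inter t b ∉ P := inter_not_mem_of_theta hP.1 htb ht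
    have h1 : nle (inter t a) t := nle_inter_left t a
    have h2 : nle (inter t b) t := nle_inter_left t b
    set w := meet (inter t a) (inter t b) with hw
    have hwa : nle w (inter t a) := meet_nle_left h1 h2
    have hwb : nle w (inter t b) := meet_nle_right h1 h2
    have hwP : w ∉ P := by
      intro hwmem
      rcases hP.2.2 _ _ hwmem with h | h
      · exact hma h
      · exact hmb h
    have hwt : nle w t := nle_trans hwa h1
    have hwA : nle w a := nle_trans hwa (nle_inter_right t a)
    have hwB : nle w b := nle_trans hwb (nle_inter_right t b)
    have hwab : nle w (inter a b) := nle_inter hwA hwB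
    have hwtab : nle w (inter t (inter a b)) := nle_inter hwt hwab
    have htab : inter t (inter a b) ∉ P := fun hmem => hwP (ideal_down_nle hP.1 hmem hwtab)
    have hab : inter a b ∉ P := fun hmem =>
      htab (ideal_down_nle hP.1 hmem (nle_inter_right t (inter a b)))
    exact ⟨hab, theta_of_inter_not_mem hP htab⟩
  · rintro ⟨hab, htab⟩
    have ht : t ∉ P := fun htP => hab (mem_of_theta hP.1 htab htP)
    have hm : inter t (inter a b) ∉ P := inter_not_mem_of_theta hP.1 htab ht
    have ha : a ∉ P := fun h => hab (ideal_down_nle hP.1 h (nle_inter_left a b))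
    have hb : b ∉ P := fun h => hab (ideal_down_nle hP.1 h (nle_inter_right a b))
    have hta : inter t a ∉ P := fun h => hm (ideal_down_nle hP.1 h
      (nle_inter (nle_inter_left t (inter a b))
        (nle_trans (nle_inter_right t (inter a b)) (nle_inter_left a b))))
    have htb : inter t b ∉ P := fun h => hm (ideal_down_nle hP.1 h
      (nle_inter (nle_inter_left t (inter a b))
        (nle_trans (nle_inter_right t (inter a b)) (nle_inter_right a b))))
    exact ⟨ha, hb, theta_of_inter_not_mem hP hta, theta_of_inter_not_mem hP htb⟩
end

section
/- Let A be a skew Boolean ∩-algebra, let P ⊆ A be a prime ideal, let t ∈ A with t ∉ P, and let a ∈ A. Then a ∉ P if and only if there exists b ∈ A with b ≼ a (in the natural preorder), b ∉ P, and t θ_P b. -/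
universe u

open SkewBooleanInterAlgebra


namespace SkewBooleanInterAlgebra
variable {α : Type u} [SkewBooleanInterAlgebra α]

lemma zero_meet' (x : α) : meet zero x = zero := by
  have h := absorb₁ (zero : α) x
  rwa [zero_join] at h

lemma rcomp_self' (x : α) : rcomp x x = zero := by
  have h1 := rcomp_meet x x
  rw [meet_idem, meet_idem] at h1
  have h2 := rcomp_join x x
  rw [meet_idem, meet_idem] at h2
  have h3 := absorb₁ (rcomp x x) x
  rw [h2, h1] at h3
  exact h3.symm

lemma meet_sq' (x y : α) : meet x (meet y (meet x y)) = meet x y := by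
  rw [← meet_assoc]; exact meet_idem _

end SkewBooleanInterAlgebra

theorem not_mem_iff_exists_npre {α : Type u} [SkewBooleanInterAlgebra α]
    (P : Set α) (hP : IsPrimeIdeal P) (t : α) (ht : t ∉ P) (a : α) :
    a ∉ P ↔ ∃ b : α, npre b a ∧ b ∉ P ∧ theta P t b := by
  obtain ⟨⟨h0, hjoinI, hdown⟩, hne, hprime⟩ := hP
  constructor
  · intro ha
    set b := meet t (meet a t) with hb
    have hbt : meet b t = b := by
      rw [hb, meet_assoc, meet_assoc, meet_idem]
    have htb : meet t b = b := by
      rw [hb, ← meet_assoc, meet_idem]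
    have hinter : inter t b = b := by
      have h1 := inter_le_right t b
      have h2 := inter_glb t b b ⟨hbt, htb⟩ ⟨meet_idem b, meet_idem b⟩
      exact h1.1.symm.trans h2.2
    have hbP : b ∉ P := by
      intro hmem
      rw [hb] at hmem
      rcases hprime t (meet a t) hmem with h | h
      · exact ht h
      rcases hprime a t h with h' | h'
      · exact ha h'
      · exact ht h'
    have hnpre : npre b a := by
      show meet b (meet a b) = b
      rw [hb]
      simp only [meet_assoc]
      rw [meet_sq', meet_sq']
    have htbt : meet t (meet b t) = b := by
      rw [hb]
      simp only [meet_assoc]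
      rw [meet_idem, ← meet_assoc, meet_idem]
    have hcb : meet (rcomp t b) b = zero := by
      have h := rcomp_meet t b; rwa [htbt] at h
    have hjcb : join (rcomp t b) b = t := by
      have h := rcomp_join t b; rwa [htbt] at h
    have hct : meet (rcomp t b) t = rcomp t b := by
      have h := absorb₁ (rcomp t b) b; rwa [hjcb] at h
    have hkey : meet (rcomp t b) (meet a (rcomp t b)) = zero := by
      calc meet (rcomp t b) (meet a (rcomp t b))
          = meet (meet (rcomp t b) t) (meet a (rcomp t b)) := by rw [hct]
        _ = meet (rcomp t b) (meet t (meet a (rcomp t b))) := meet_assoc _ _ _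
        _ = meet (rcomp t b) (meet a (meet t (rcomp t b))) := normality _ _ _ _
        _ = meet (rcomp t b) (meet a (meet t (meet t (rcomp t b)))) := by
            rw [← meet_assoc t t, meet_idem]
        _ = meet (rcomp t b) (meet t (meet a (meet t (rcomp t b)))) := normality _ _ _ _
        _ = meet (rcomp t b) (meet b (rcomp t b)) := by
            rw [hb]; simp only [meet_assoc]
        _ = meet (meet (rcomp t b) b) (rcomp t b) := (meet_assoc _ _ _).symm
        _ = zero := by rw [hcb, zero_meet']
    have hcP : rcomp t b ∈ P := by
      have h0' : meet (rcomp t b) (meet a (rcomp t b)) ∈ P := by rw [hkey]; exact h0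
      rcases hprime _ _ h0' with h | h
      · exact h
      rcases hprime a (rcomp t b) h with h' | h'
      · exact absurd h' ha
      · exact h'
    refine ⟨b, hnpre, hbP, ?_⟩
    show join (rcomp t (inter t b)) (rcomp b (inter t b)) ∈ P
    rw [hinter, rcomp_self', join_zero]
    exact hcP
  · rintro ⟨b, hba, hbP, -⟩ ha
    exact hbP (hdown b a ha hba)
end

section
/- Let A be a skew Boolean ∩-algebra in which for every x ∈ A with x ≠ 0 there exists a prime ideal P of A with x ∉ P (equivalently, the intersection of all prime ideals is {0}). If a, b ∈ A satisfy a θ_P b for every prime ideal P of A, then a = b. -/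
universe u

open SkewBooleanInterAlgebra

theorem eq_of_theta_all_primes {α : Type u} [SkewBooleanInterAlgebra α]
    (hsep : ∀ x : α, x ≠ zero → ∃ P : Set α, IsPrimeIdeal P ∧ x ∉ P)
    (a b : α) (hab : ∀ P : Set α, IsPrimeIdeal P → theta P a b) :
    a = b := by
  have zero_meet : ∀ x : α, meet zero x = zero := fun x => by
    have h := absorb₁ (zero : α) x
    rwa [zero_join] at h
  have meet_zero : ∀ x : α, meet x zero = zero := fun x => by
    have h := absorb₂ (zero : α) x
    rwa [join_zero] at h
  set m := inter a b with hm
  set c := join (rcomp a m) (rcomp b m) with hc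
  have hc0 : c = zero := by
    by_contra h
    obtain ⟨P, hP, hnP⟩ := hsep c h
    exact hnP (hab P hP)
  -- rcomp a m ≼ c and rcomp b m ≼ c
  have h1 : rcomp a m = zero := by
    have : meet (rcomp a m) (meet c (rcomp a m)) = rcomp a m := by
      rw [← meet_assoc, hc, absorb₁, meet_idem]
    rw [hc0, zero_meet, meet_zero] at this
    exact this.symm
  have h2 : rcomp b m = zero := by
    have : meet (rcomp b m) (meet c (rcomp b m)) = rcomp b m := by
      rw [← meet_assoc, hc]
      rw [meet_distrib_left, meet_idem, absorb₂]
    rw [hc0, zero_meet, meet_zero] at this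
    exact this.symm
  have ha : a = m := by
    have h := rcomp_join a m
    rw [h1, zero_join] at h
    have hma : meet m a = m := (inter_le_left a b).1
    have ham : meet a m = m := (inter_le_left a b).2
    rw [← h, hma, ham]
  have hb : b = m := by
    have h := rcomp_join b m
    rw [h2, zero_join] at h
    have hmb : meet m b = m := (inter_le_right a b).1
    have hbm : meet b m = m := (inter_le_right a b).2
    rw [← h, hmb, hbm]
  rw [ha, hb]
end

section
/- Let A be a skew Boolean ∩-algebra, let P ⊆ A be a prime ideal, and let a, b ∈ A with a ∉ P and b ∉ P. Then there exists c ∈ A with c ∉ P, a θ_P c, and c D b (indeed c = (a∧b∧a)∨b∨(a∧b∧a) works). -/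
universe u

open SkewBooleanInterAlgebra

theorem exists_theta_dGreen {α : Type u} [SkewBooleanInterAlgebra α]
    (P : Set α) (hP : IsPrimeIdeal P) (a b : α) (ha : a ∉ P) (hb : b ∉ P) :
    (∃ c : α, c ∉ P ∧ theta P a c ∧ dGreen c b) ∧
      (join (meet a (meet b a)) (join b (meet a (meet b a))) ∉ P ∧
        theta P a (join (meet a (meet b a)) (join b (meet a (meet b a)))) ∧
        dGreen (join (meet a (meet b a)) (join b (meet a (meet b a)))) b) := by
  obtain ⟨⟨hzero, hjoin, hdown⟩, -, hprime⟩ := hP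
  set m := meet a (meet b a) with hm
  set c := join m (join b m) with hc
  -- basic meet facts about m
  have h_ma : meet m a = m := by rw [hm, meet_assoc, meet_assoc, meet_idem]
  have h_am : meet a m = m := by rw [hm, ← meet_assoc, meet_idem]
  have h_mb : meet m b = meet a b := by
    rw [hm, meet_assoc, meet_assoc, normality, ← meet_assoc, meet_idem, meet_idem]
  have h_bm : meet b m = meet b a := by
    rw [hm, normality, ← meet_assoc, meet_idem, meet_idem]
  have h_mbm : meet m (meet b m) = m := by
    rw [h_bm, hm, meet_assoc, meet_idem]
  have h_mc : meet m c = m := by rw [hc]; exact absorb₁ m (join b m)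
  have h_cm : meet c m = m := by
    rw [hc, meet_distrib_right, meet_idem, absorb₂, join_idem]
  -- m is not in P
  have hm_notP : m ∉ P := by
    intro h
    rw [hm] at h
    rcases hprime a (meet b a) h with h1 | h2
    · exact ha h1
    · rcases hprime b a h2 with h3 | h4
      · exact hb h3
      · exact ha h4
  -- b ≼ c
  have h_cb : meet c b = join (meet a b) (join b (meet a b)) := by
    rw [hc, meet_distrib_right, meet_distrib_right, meet_idem, h_mb]
  have h_bc : npre b c := by
    show meet b (meet c b) = b
    rw [h_cb, meet_distrib_left, absorb₁, ← meet_assoc, absorb₄]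
  have hc_notP : c ∉ P := fun h => hb (hdown b c h h_bc)
  -- c ≼ b
  have h_bc2 : meet b c = join (meet b m) b := by
    rw [hc, meet_distrib_left, absorb₁]
  have h_mf : meet m (join (meet b m) b) = m := by
    rw [meet_distrib_left, h_mbm, absorb₃]
  have h_bf : meet b (join (meet b m) b) = join (meet b m) b := by
    rw [meet_distrib_left, ← meet_assoc, meet_idem]
  have h_cf : meet c (join (meet b m) b) = c := by
    rw [hc, meet_distrib_right, meet_distrib_right, h_mf, h_bf]
    rw [join_assoc (meet b m) b m]
    rw [← regularity m (meet b m) b]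
    rw [← join_assoc (meet b m) m (join b m)]
    rw [absorb₄]
    rw [← join_assoc m m, join_idem]
  have h_cb_pre : npre c b := by
    show meet c (meet b c) = c
    rw [h_bc2]; exact h_cf
  -- theta P a c
  have hglb := inter_glb a c m ⟨h_ma, h_am⟩ ⟨h_mc, h_cm⟩
  have h_g1 : npre m (meet a (meet (inter a c) a)) := by
    show meet m (meet (meet a (meet (inter a c) a)) m) = m
    have step : meet (meet a (meet (inter a c) a)) m = m := by
      rw [meet_assoc a, meet_assoc (inter a c), h_am, hglb.2, h_am]
    rw [step]; exact meet_idem m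
  have h_g2 : npre m (meet c (meet (inter a c) c)) := by
    show meet m (meet (meet c (meet (inter a c) c)) m) = m
    have step : meet (meet c (meet (inter a c) c)) m = m := by
      rw [meet_assoc c, meet_assoc (inter a c), h_cm, hglb.2, h_cm]
    rw [step]; exact meet_idem m
  have h_ra : rcomp a (inter a c) ∈ P := by
    have h0 : meet (rcomp a (inter a c)) (meet a (meet (inter a c) a)) ∈ P := by
      rw [rcomp_meet]; exact hzero
    rcases hprime _ _ h0 with h | h
    · exact h
    · exact absurd (hdown m _ h h_g1) hm_notP
  have h_rc : rcomp c (inter a c) ∈ P := by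
    have h0 : meet (rcomp c (inter a c)) (meet c (meet (inter a c) c)) ∈ P := by
      rw [rcomp_meet]; exact hzero
    rcases hprime _ _ h0 with h | h
    · exact h
    · exact absurd (hdown m _ h h_g2) hm_notP
  have h_theta : theta P a c := hjoin _ h_ra _ h_rc
  exact ⟨⟨c, hc_notP, h_theta, h_cb_pre, h_bc⟩, hc_notP, h_theta, h_cb_pre, h_bc⟩
end

section
/- Let p : E → B and p' : E' → B' be surjective local homeomorphisms between Boolean spaces, let h : B → B' be a continuous map, and let g : E → E' be a proper continuous map with p' ∘ g = h ∘ p. Then g is bijective on fibers (for every b ∈ B, g restricts to a bijection from p⁻¹{b} onto p'⁻¹{h(b)}) if and only if the commutative square is a pullback, i.e., the canonical map e : E → {(b, y) ∈ B × E' | h(b) = p'(y)} given by e(x) = (p(x), g(x)) is a homeomorphism onto this subspace of B × E'. -/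
theorem bijOn_fibers_iff_pullback {E E' B B' : Type*}
    [TopologicalSpace E] [TopologicalSpace E'] [TopologicalSpace B] [TopologicalSpace B']
    [T2Space E] [T2Space E'] [T2Space B] [T2Space B']
    [LocallyCompactSpace E] [LocallyCompactSpace E']
    [LocallyCompactSpace B] [LocallyCompactSpace B']
    (hE : TopologicalSpace.IsTopologicalBasis {s : Set E | IsClopen s})
    (hE' : TopologicalSpace.IsTopologicalBasis {s : Set E' | IsClopen s})
    (hB : TopologicalSpace.IsTopologicalBasis {s : Set B | IsClopen s})
    (hB' : TopologicalSpace.IsTopologicalBasis {s : Set B' | IsClopen s})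
    (p : E → B) (p' : E' → B')
    (hp : IsLocalHomeomorph p) (hpsurj : Function.Surjective p)
    (hp' : IsLocalHomeomorph p') (hp'surj : Function.Surjective p')
    (h : B → B') (hh : Continuous h)
    (g : E → E') (hg : Continuous g)
    (hgproper : ∀ K : Set E', IsCompact K → IsCompact (g ⁻¹' K))
    (hcomm : p' ∘ g = h ∘ p) :
    (∀ b : B, Set.BijOn g (p ⁻¹' {b}) (p' ⁻¹' {h b})) ↔
      IsHomeomorph (fun x : E =>
        (⟨(p x, g x), (congrFun hcomm x).symm⟩ : {q : B × E' // h q.1 = p' q.2})) := by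
  set e : E → {q : B × E' // h q.1 = p' q.2} :=
    fun x => ⟨(p x, g x), (congrFun hcomm x).symm⟩ with he
  constructor
  · intro hbij
    refine ⟨Continuous.subtype_mk ((hp.continuous.prodMk hg)) _, ?_, ?_, ?_⟩
    · -- open map
      intro W hW
      rw [isOpen_iff_forall_mem_open]
      rintro _ ⟨x, hxW, rfl⟩
      obtain ⟨f', hgx, hf'⟩ := hp' (g x)
      set U := g ⁻¹' f'.source ∩ W with hU
      have hUopen : IsOpen U := (f'.open_source.preimage hg).inter hW
      refine ⟨Subtype.val ⁻¹' ((p '' U) ×ˢ f'.source), ?_, ?_, ?_⟩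
      · rintro ⟨⟨b, y⟩, hq⟩ ⟨⟨x', hx'U, rfl⟩, hy⟩
        have hgx' : g x' = y := by
          have hinj : Set.InjOn p' f'.source := by rw [hf']; exact f'.injOn
          refine hinj hx'U.1 hy ?_
          have h1 : p' (g x') = h (p x') := congrFun hcomm x'
          exact h1.trans hq
        exact ⟨x', hx'U.2, by simp [he, hgx']⟩
      · exact ((hp.isOpenMap _ hUopen).prod f'.open_source).preimage continuous_subtype_val
      · exact ⟨⟨x, ⟨hgx, hxW⟩, rfl⟩, hgx⟩
    · -- injective
      intro x x' hxx'
      have h1 : p x = p x' := congrArg (fun q => q.val.1) hxx'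
      have h2 : g x = g x' := congrArg (fun q => q.val.2) hxx'
      exact (hbij (p x)).injOn rfl h1.symm h2
    · -- surjective
      rintro ⟨⟨b, y⟩, hq⟩
      obtain ⟨x, hx, hgx⟩ := (hbij b).surjOn (show y ∈ p' ⁻¹' {h b} from hq.symm)
      have hpx : p x = b := Set.mem_preimage.mp hx
      exact ⟨x, by simp [he, hgx, hpx]⟩
  · intro hhom b
    refine ⟨?_, ?_, ?_⟩
    · intro x hx
      have : p x = b := hx
      simp only [Set.mem_preimage, Set.mem_singleton_iff, ← this]
      exact congrFun hcomm x
    · intro x hx x' hx' hgxx'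
      refine hhom.injective (Subtype.ext (Prod.ext ?_ hgxx'))
      exact (Set.mem_singleton_iff.mp hx).trans (Set.mem_singleton_iff.mp hx').symm
    · intro y hy
      obtain ⟨x, hx⟩ := hhom.surjective ⟨(b, y), (Set.mem_singleton_iff.mp hy).symm⟩
      have h1 : p x = b := congrArg (fun q => q.val.1) hx
      have h2 : g x = y := congrArg (fun q => q.val.2) hx
      exact ⟨x, h1, h2⟩
end

section
/- Let q : E → B be a surjective local homeomorphism of topological spaces where B is a Boolean space, let U ⊆ B be a compact open set, and let e ∈ E with q(e) ∈ U. Then there exists a continuous section s : U → E above U passing through e; that is, a continuous map s from the subspace U to E with q(s(u)) = u for all u ∈ U and s(q(e)) = e. -/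
/-!
A local homeomorphism has a continuous local inverse through every point, and since the clopen
sets form a basis it can be restricted to a clopen neighbourhood inside `U`. Sections over
clopen sets glue by cases without any compatibility condition, so starting from a section
through `e` and adding finitely many local sections given by compactness of `U`, one obtains a
section over all of `U` that still passes through `e`.
-/

open Set TopologicalSpace

section

variable {E B : Type*} [TopologicalSpace E] [TopologicalSpace B]

/-- A continuous section of `q` over `V`, encoded as a function on all of `B` whose values off `V`
are irrelevant. -/
def IsSectionOn (q : E → B) (s : B → E) (V : Set B) : Prop :=
  ContinuousOn s V ∧ ∀ b ∈ V, q (s b) = b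

namespace IsSectionOn

variable {q : E → B} {s t : B → E} {V W : Set B}

theorem mono (hs : IsSectionOn q s V) (hWV : W ⊆ V) : IsSectionOn q s W :=
  ⟨hs.1.mono hWV, fun b hb => hs.2 b (hWV hb)⟩

theorem piecewise [DecidablePred (· ∈ V)] (hs : IsSectionOn q s V) (ht : IsSectionOn q t W)
    (hV : IsClopen V) : IsSectionOn q (V.piecewise s t) (V ∪ W) := by
  refine ⟨ContinuousOn.piecewise ?_ ?_ ?_, fun b hb => ?_⟩
  · simp [hV.frontier_eq]
  · rw [hV.isClosed.closure_eq]
    exact hs.1.mono inter_subset_right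
  · rw [hV.isOpen.isClosed_compl.closure_eq]
    exact ht.1.mono fun b ⟨hbVW, hbV⟩ => hbVW.resolve_left hbV
  · by_cases hbV : b ∈ V
    · rw [piecewise_eq_of_mem _ _ _ hbV, hs.2 b hbV]
    · rw [piecewise_eq_of_notMem _ _ _ hbV, ht.2 b (hb.resolve_left hbV)]

end IsSectionOn

theorem IsLocalHomeomorph.exists_isSectionOn_isClopen
    (hB : IsTopologicalBasis {s : Set B | IsClopen s}) {q : E → B} (hq : IsLocalHomeomorph q)
    (e : E) {O : Set B} (hO : IsOpen O) (he : q e ∈ O) :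
    ∃ W, IsClopen W ∧ q e ∈ W ∧ W ⊆ O ∧ ∃ s, IsSectionOn q s W ∧ s (q e) = e := by
  obtain ⟨φ, heφ, rfl⟩ := hq e
  obtain ⟨W, hW, heW, hWO⟩ :=
    hB.exists_subset_of_mem_open (u := φ.target ∩ O) ⟨φ.map_source heφ, he⟩
      (φ.open_target.inter hO)
  refine ⟨W, hW, heW, fun b hb => (hWO hb).2, φ.symm, ⟨?_, ?_⟩, φ.left_inv heφ⟩
  · exact φ.symm.continuousOn.mono fun b hb => (hWO hb).1
  · exact fun b hb => φ.right_inv (hWO hb).1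

theorem IsSectionOn.exists_extend_of_isCompact
    (hB : IsTopologicalBasis {s : Set B | IsClopen s}) {q : E → B} (hq : IsLocalHomeomorph q)
    (hqsurj : Function.Surjective q) {U V : Set B} (hUcomp : IsCompact U) (hUopen : IsOpen U)
    (hV : IsClopen V) (hVU : V ⊆ U) {s : B → E} (hs : IsSectionOn q s V) :
    ∃ t, IsSectionOn q t U ∧ EqOn t s V := by
  classical
  suffices ∃ W, IsClopen W ∧ U ⊆ W ∧ W ⊆ U ∧ V ⊆ W ∧ ∃ t, IsSectionOn q t W ∧ EqOn t s V by
    obtain ⟨W, -, hUW, hWU, -, t, ht, hts⟩ := this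
    exact ⟨t, (subset_antisymm hWU hUW) ▸ ht, hts⟩
  refine hUcomp.induction_on (p := fun K => ∃ W, IsClopen W ∧ K ⊆ W ∧ W ⊆ U ∧ V ⊆ W ∧
    ∃ t, IsSectionOn q t W ∧ EqOn t s V) ?empty ?mono ?union ?nhds
  case empty => exact ⟨V, hV, empty_subset V, hVU, subset_rfl, s, hs, eqOn_refl s V⟩
  case mono =>
    rintro K L hKL ⟨W, hW, hLW, hWU, hVW, t, ht, hts⟩
    exact ⟨W, hW, hKL.trans hLW, hWU, hVW, t, ht, hts⟩
  case union =>
    rintro K L ⟨W₁, hW₁, hKW₁, hW₁U, hVW₁, t₁, ht₁, ht₁s⟩ ⟨W₂, hW₂, hLW₂, hW₂U, -, t₂, ht₂, -⟩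
    refine ⟨W₁ ∪ W₂, hW₁.union hW₂, union_subset_union hKW₁ hLW₂, union_subset hW₁U hW₂U,
      hVW₁.trans subset_union_left, W₁.piecewise t₁ t₂, ht₁.piecewise ht₂ hW₁, ?_⟩
    exact fun b hb => (piecewise_eq_of_mem _ _ _ (hVW₁ hb)).trans (ht₁s hb)
  case nhds =>
    intro b hbU
    obtain ⟨e, rfl⟩ := hqsurj b
    obtain ⟨W, hW, heW, hWU, t, ht, -⟩ := hq.exists_isSectionOn_isClopen hB e hUopen hbU
    refine ⟨W, mem_nhdsWithin_of_mem_nhds (hW.isOpen.mem_nhds heW), V ∪ W, hV.union hW,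
      subset_union_right, union_subset hVU hWU, subset_union_left, V.piecewise s t,
      hs.piecewise ht hV, fun b hb => piecewise_eq_of_mem _ _ _ hb⟩

end

theorem exists_section_through_point_general {E B : Type*}
    [TopologicalSpace E] [TopologicalSpace B]
    (hB : TopologicalSpace.IsTopologicalBasis {s : Set B | IsClopen s})
    (q : E → B) (hq : IsLocalHomeomorph q) (hqsurj : Function.Surjective q)
    (U : Set B) (hUcomp : IsCompact U) (hUopen : IsOpen U)
    (e : E) (he : q e ∈ U) :
    ∃ s : U → E, Continuous s ∧ (∀ u : U, q (s u) = u) ∧ s ⟨q e, he⟩ = e := by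
  obtain ⟨W, hW, heW, hWU, s₀, hs₀, hs₀e⟩ := hq.exists_isSectionOn_isClopen hB e hUopen he
  obtain ⟨s, hs, hss₀⟩ := hs₀.exists_extend_of_isCompact hB hq hqsurj hUcomp hUopen hW hWU
  exact ⟨U.domRestrict s, hs.1.domRestrict, fun u => hs.2 u u.2, (hss₀ heW).trans hs₀e⟩

theorem exists_section_through_point {E B : Type*}
    [TopologicalSpace E] [TopologicalSpace B]
    [T2Space B] [LocallyCompactSpace B]
    (hB : TopologicalSpace.IsTopologicalBasis {s : Set B | IsClopen s})
    (q : E → B) (hq : IsLocalHomeomorph q) (hqsurj : Function.Surjective q)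
    (U : Set B) (hUcomp : IsCompact U) (hUopen : IsOpen U)
    (e : E) (he : q e ∈ U) :
    ∃ s : U → E, Continuous s ∧ (∀ u : U, q (s u) = u) ∧ s ⟨q e, he⟩ = e :=
  exists_section_through_point_general hB q hq hqsurj U hUcomp hUopen e he
end

section
/- Let p : E → B be a surjective local homeomorphism of topological spaces where B is a Boolean space, and suppose B is the union of countably many compact open subsets, i.e., there are compact open sets Cₙ ⊆ B (n ∈ ℕ) with ⋃ₙ Cₙ = B. Then p has a global continuous section: there exists a continuous map s : B → E with p ∘ s = id_B. -/
open Set TopologicalSpace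

theorem exists_global_section_of_sigma_compact {E B : Type*}
    [TopologicalSpace E] [TopologicalSpace B]
    [T2Space B] [LocallyCompactSpace B]
    (hB : TopologicalSpace.IsTopologicalBasis {s : Set B | IsClopen s})
    (p : E → B) (hp : IsLocalHomeomorph p) (hpsurj : Function.Surjective p)
    (C : ℕ → Set B) (hCcomp : ∀ n, IsCompact (C n)) (hCopen : ∀ n, IsOpen (C n))
    (hcover : (⋃ n, C n) = Set.univ) :
    ∃ s : B → E, Continuous s ∧ ∀ b : B, p (s b) = b := by
  classical
  rcases isEmpty_or_nonempty B with hBe | hBne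
  · refine ⟨fun b => isEmptyElim b, ?_, fun b => isEmptyElim b⟩
    refine continuous_def.mpr fun u _ => ?_
    rw [Set.eq_empty_of_isEmpty ((fun b : B => (isEmptyElim b : E)) ⁻¹' u)]
    exact isOpen_empty
  obtain ⟨b₀⟩ := hBne
  obtain ⟨e₀, -⟩ := hpsurj b₀
  -- Step 1: local clopen sections
  have key : ∀ b : B, ∃ U : Set B, IsClopen U ∧ b ∈ U ∧ ∃ t : B → E,
      ContinuousOn t U ∧ ∀ x ∈ U, p (t x) = x := by
    intro b
    obtain ⟨e, he⟩ := hpsurj b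
    obtain ⟨f, hef, hfp⟩ := hp e
    have hbt : b ∈ f.target := by
      rw [← he, hfp]; exact f.map_source hef
    obtain ⟨U, hU, hbU, hUsub⟩ := hB.exists_subset_of_mem_open hbt f.open_target
    refine ⟨U, hU, hbU, f.symm, (f.continuousOn_symm).mono hUsub, fun x hx => ?_⟩
    rw [hfp]
    exact f.right_inv (hUsub hx)
  choose U hUclopen hUmem t htcont htsec using key
  -- Step 2: finite subcovers
  have hsub : ∀ n, ∃ s : Finset B, C n ⊆ ⋃ b ∈ s, U b := fun n =>
    (hCcomp n).elim_finite_subcover U (fun b => (hUclopen b).isOpen)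
      (fun x _ => mem_iUnion.mpr ⟨x, hUmem x⟩)
  choose F hF using hsub
  -- a countable family of clopen sets with sections
  set V : ℕ → Set B := fun m =>
    if h : m.unpair.2 < ((F m.unpair.1).toList).length then
      U (((F m.unpair.1).toList).get ⟨m.unpair.2, h⟩) else ∅ with hV
  set T : ℕ → B → E := fun m =>
    if h : m.unpair.2 < ((F m.unpair.1).toList).length then
      t (((F m.unpair.1).toList).get ⟨m.unpair.2, h⟩) else fun _ => e₀ with hT
  have hVclopen : ∀ m, IsClopen (V m) := by
    intro m; rw [hV]; dsimp only
    split
    · exact hUclopen _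
    · exact isClopen_empty
  have hTcont : ∀ m, ContinuousOn (T m) (V m) := by
    intro m; rw [hV, hT]; dsimp only
    split
    · exact htcont _
    · exact continuousOn_empty _
  have hTsec : ∀ m, ∀ x ∈ V m, p (T m x) = x := by
    intro m; rw [hV, hT]; dsimp only
    split
    · exact htsec _
    · exact fun x hx => absurd hx (notMem_empty x)
  have hcov : ∀ b : B, ∃ m, b ∈ V m := by
    intro b
    have hb : b ∈ ⋃ n, C n := hcover ▸ mem_univ b
    obtain ⟨n, hn⟩ := mem_iUnion.mp hb
    obtain ⟨c, hc, hbc⟩ := mem_iUnion₂.mp (hF n hn)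
    obtain ⟨i, hi⟩ := List.mem_iff_get.mp ((Finset.mem_toList).mpr hc)
    refine ⟨Nat.pair n i, ?_⟩
    rw [hV]; dsimp only
    rw [Nat.unpair_pair]
    rw [dif_pos i.isLt]
    exact hi ▸ hbc
  -- glue
  refine ⟨fun b => T (Nat.find (hcov b)) b, ?_, fun b =>
    hTsec _ b (Nat.find_spec (hcov b))⟩
  rw [continuous_iff_continuousAt]
  intro b
  set k := Nat.find (hcov b) with hk
  have hbk : b ∈ V k := Nat.find_spec (hcov b)
  set W : Set B := V k ∩ ⋂ j ∈ Finset.range k, (V j)ᶜ with hW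
  have hWopen : IsOpen W := by
    refine ((hVclopen k).isOpen).inter (isOpen_biInter_finset fun j _ =>
      (hVclopen j).compl.isOpen)
  have hbW : b ∈ W := by
    refine ⟨hbk, mem_biInter fun j hj => Nat.find_min (hcov b) (Finset.mem_range.mp hj)⟩
  have hagree : ∀ x ∈ W, T (Nat.find (hcov x)) x = T k x := by
    intro x hx
    have : Nat.find (hcov x) = k := by
      refine Nat.find_eq_iff (hcov x) |>.mpr ⟨hx.1, fun j hj => ?_⟩
      exact Set.mem_iInter₂.mp hx.2 j (Finset.mem_range.mpr hj)
    rw [this]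
  have hTk : ContinuousAt (T k) b :=
    (hTcont k).continuousAt ((hVclopen k).isOpen.mem_nhds hbk)
  refine hTk.congr ?_
  exact Filter.eventuallyEq_of_mem (hWopen.mem_nhds hbW) (fun x hx => (hagree x hx).symm)
end

section
/- Let ω₁ denote the first uncountable ordinal and let Ω = {α | α < ω₁} be the set of countable ordinals equipped with the order topology (generated by the open intervals). There is no function s : Ω → Ω that is locally constant and progressive, i.e., no locally constant s satisfying β ≤ s(β) for all β ∈ Ω. -/
/-- The set of countable ordinals, i.e. ordinals below ω₁, the least
uncountable ordinal. -/
def CountableOrdinals : Type 1 := {o : Ordinal.{0} // o < (Cardinal.aleph 1).ord}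

noncomputable instance : LinearOrder CountableOrdinals :=
  inferInstanceAs (LinearOrder {o : Ordinal.{0} // o < (Cardinal.aleph 1).ord})

/-- The order (interval) topology on the countable ordinals. -/
noncomputable instance : TopologicalSpace CountableOrdinals := Preorder.topology CountableOrdinals

instance : OrderTopology CountableOrdinals := ⟨rfl⟩

/-!
Starting anywhere, choose `x (n + 1) > s (x n)`; progressivity makes `x` strictly increasing, and
since ω₁ has uncountable cofinality the sequence has a supremum `b` below ω₁. Local constancy
at `b` forces `s (x n) = s b` for large `n`, whence `b ≤ s b = s (x n) < x (n + 1) ≤ b`.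
-/

open Filter Topology

theorem IsLocallyConstant.eventually_eq_of_tendsto {X Y ι : Type*} [TopologicalSpace X]
    {s : X → Y} (hs : IsLocallyConstant s) {l : Filter ι} {x : ι → X} {b : X}
    (hx : Tendsto x l (𝓝 b)) : ∀ᶠ i in l, s (x i) = s b :=
  hx ((hs.isOpen_fiber (s b)).mem_nhds rfl)

theorem not_isLocallyConstant_of_le_self {X : Type*} [LinearOrder X] [TopologicalSpace X]
    [OrderTopology X] [Nonempty X] [NoMaxOrder X]
    (hlub : ∀ x : ℕ → X, ∃ b, IsLUB (Set.range x) b) {s : X → X} (hle : ∀ β, β ≤ s β) :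
    ¬ IsLocallyConstant s := by
  intro hs
  choose next hnext using fun β : X => exists_gt (s β)
  let x : ℕ → X := fun n => next^[n] (Classical.arbitrary X)
  have hstep : ∀ n, s (x n) < x (n + 1) := fun n => by
    simpa only [x, Function.iterate_succ_apply'] using hnext (x n)
  have hmono : StrictMono x := strictMono_nat_of_lt_succ fun n => (hle _).trans_lt (hstep n)
  obtain ⟨b, hb⟩ := hlub x
  obtain ⟨n, hn⟩ := (hs.eventually_eq_of_tendsto (tendsto_atTop_isLUB hmono.monotone hb)).exists
  have hxb : x (n + 1) ≤ b := hb.1 ⟨n + 1, rfl⟩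
  exact (hle b).not_gt (hn ▸ (hstep n).trans_le hxb)

namespace CountableOrdinals

lemma isSuccLimit_ord_aleph_one : Order.IsSuccLimit (Cardinal.aleph 1).ord :=
  Cardinal.isSuccLimit_ord (Cardinal.aleph0_le_aleph 1)

instance : Nonempty CountableOrdinals := ⟨⟨0, isSuccLimit_ord_aleph_one.bot_lt⟩⟩

instance : NoMaxOrder CountableOrdinals :=
  ⟨fun β => ⟨⟨Order.succ β.1, isSuccLimit_ord_aleph_one.succ_lt β.2⟩, Order.lt_succ β.1⟩⟩

theorem exists_isLUB_range (x : ℕ → CountableOrdinals) : ∃ b, IsLUB (Set.range x) b := by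
  have hlt : ⨆ n, (x n).1 < (Cardinal.aleph 1).ord :=
    (Ordinal.iSup_lt_omega_one fun n => (x n).2.trans_eq (Cardinal.ord_aleph 1)).trans_eq
      (Cardinal.ord_aleph 1).symm
  refine ⟨⟨_, hlt⟩, ?_, ?_⟩
  · rintro _ ⟨n, rfl⟩
    exact Ordinal.le_iSup _ n
  · intro β hβ
    exact Ordinal.iSup_le fun n => hβ ⟨n, rfl⟩

end CountableOrdinals

/-- There is no locally constant progressive map on the space of countable
ordinals with the interval topology. -/
theorem no_locallyConstant_progressive :
    ¬ ∃ s : CountableOrdinals → CountableOrdinals,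
        IsLocallyConstant s ∧ ∀ β : CountableOrdinals, β ≤ s β := by
  rintro ⟨s, hs, hle⟩
  exact not_isLocallyConstant_of_le_self CountableOrdinals.exists_isLUB_range hle hs
end
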